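/- arXiv:1607.05116 — 7 statements merged into one kernel-verified Lean document; each statement's English description precedes it below -/
import Mathlib

section
/- Let p > 1 and define u : ℝ² → ℝ by u(x₁,x₂) = |x₁|^{p/(p-1)} − |x₂|^{p/(p-1)}. Then u is differentiable at every point of ℝ², with partial derivatives ∂₁u(x) = (p/(p-1))·|x₁|^{(2-p)/(p-1)}·x₁ and ∂₂u(x) = −(p/(p-1))·|x₂|^{(2-p)/(p-1)}·x₂ (interpreted as 0 when the corresponding coordinate vanishes), and u is a weak solution of the orthotropic p-Laplace equation on ℝ²: for every compactly supported smooth function φ : ℝ² → ℝ one has ∫_{ℝ²} ( |∂₁u|^{p-2}∂₁u · ∂₁φ + |∂₂u|^{p-2}∂₂u · ∂₂φ ) dx = 0. -/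
open MeasureTheory Filter Topology

lemma absrpow_hasDerivAt {a : ℝ} (ha : 1 < a) (t : ℝ) :
    HasDerivAt (fun s : ℝ => |s| ^ a) (a * |t| ^ (a - 2) * t) t := by
  rcases lt_trichotomy t 0 with ht | rfl | ht
  · have h1 : HasDerivAt (fun s : ℝ => s ^ a) (a * (-t) ^ (a - 1)) (-t) :=
      Real.hasDerivAt_rpow_const (Or.inl (by linarith))
    have h2 := h1.comp t (hasDerivAt_neg t)
    have h3 : HasDerivAt (fun s : ℝ => |s| ^ a) (a * (-t) ^ (a - 1) * -1) t := by
      apply h2.congr_of_eventuallyEq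
      filter_upwards [eventually_lt_nhds ht] with s hs
      rw [abs_of_neg hs]; rfl
    convert h3 using 1
    rw [abs_of_neg ht, show a - 1 = (a - 2) + 1 by ring,
      Real.rpow_add_one (by linarith : (-t) ≠ 0)]
    ring
  · have h : HasDerivAt (fun s : ℝ => |s| ^ a) 0 0 := by
      rw [hasDerivAt_iff_tendsto_slope]
      have hg : Tendsto (fun s : ℝ => |s| ^ (a - 1)) (𝓝 0) (𝓝 0) := by
        have hc : ContinuousAt (fun y : ℝ => y ^ (a - 1)) 0 :=
          Real.continuousAt_rpow_const 0 _ (Or.inr (by linarith))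
        have := hc.tendsto
        rw [Real.zero_rpow (by linarith : a - 1 ≠ 0)] at this
        exact this.comp (continuous_abs.tendsto' 0 0 abs_zero)
      apply squeeze_zero_norm' _ (hg.mono_left nhdsWithin_le_nhds)
      filter_upwards [self_mem_nhdsWithin] with s hs
      have hs0 : s ≠ 0 := hs
      have h0 : (0:ℝ) < |s| := abs_pos.2 hs0
      have : slope (fun s : ℝ => |s| ^ a) 0 s = |s| ^ a / s := by
        simp [slope_def_field, Real.zero_rpow (by linarith : a ≠ 0)]
      rw [this, norm_div, Real.norm_eq_abs, Real.norm_eq_abs,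
        abs_of_nonneg (Real.rpow_nonneg (abs_nonneg s) a),
        Real.rpow_sub_one (ne_of_gt h0)]
    simpa using h
  · have h1 : HasDerivAt (fun s : ℝ => s ^ a) (a * t ^ (a - 1)) t :=
      Real.hasDerivAt_rpow_const (Or.inl (by linarith))
    have h3 : HasDerivAt (fun s : ℝ => |s| ^ a) (a * t ^ (a - 1)) t := by
      apply h1.congr_of_eventuallyEq
      filter_upwards [eventually_gt_nhds ht] with s hs
      rw [abs_of_pos hs]
    convert h3 using 1
    rw [abs_of_pos ht, show a - 1 = (a - 2) + 1 by ring,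
      Real.rpow_add_one (by linarith : t ≠ 0)]
    ring

lemma flux_eq {p : ℝ} (hp : 1 < p) (t : ℝ) :
    |p / (p - 1) * |t| ^ (p / (p - 1) - 2) * t| ^ (p - 2)
        * (p / (p - 1) * |t| ^ (p / (p - 1) - 2) * t)
      = (p / (p - 1)) ^ (p - 1) * t := by
  have hp1 : (0:ℝ) < p - 1 := by linarith
  set a := p / (p - 1) with ha_def
  have ha0 : 0 < a := div_pos (by linarith) hp1
  rcases eq_or_ne t 0 with rfl | ht
  · simp
  · have h0 : (0:ℝ) < |t| := abs_pos.2 ht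
    have habs : |a * |t| ^ (a - 2) * t| = a * |t| ^ (a - 1) := by
      rw [abs_mul, abs_mul, abs_of_pos ha0,
        abs_of_nonneg (Real.rpow_nonneg (abs_nonneg t) _), mul_assoc]
      congr 1
      rw [show a - 1 = (a - 2) + 1 by ring, Real.rpow_add_one (ne_of_gt h0)]
    have hexp : (a - 1) * (p - 2) + (a - 2) = 0 := by
      rw [ha_def]; field_simp; ring
    have e1 : a ^ (p - 1) = a ^ (p - 2) * a := by
      rw [show p - 1 = (p - 2) + 1 by ring, Real.rpow_add_one (ne_of_gt ha0)]
    have e2 : |t| ^ ((a - 1) * (p - 2)) * |t| ^ (a - 2) = 1 := by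
      rw [← Real.rpow_add h0, hexp, Real.rpow_zero]
    rw [habs, Real.mul_rpow ha0.le (Real.rpow_nonneg (abs_nonneg t) _),
      ← Real.rpow_mul (abs_nonneg t), e1]
    linear_combination a ^ (p - 2) * a * t * e2

/-- `u(x₁,x₂) = |x₁|^{p/(p-1)} − |x₂|^{p/(p-1)}` is differentiable everywhere,
with the stated partial derivatives, and is a weak solution of the orthotropic
`p`-Laplace equation on `ℝ²`. -/
theorem stmt_0 (p : ℝ) (hp : 1 < p)
    (u : ℝ × ℝ → ℝ)
    (hu : ∀ x : ℝ × ℝ, u x = |x.1| ^ (p / (p - 1)) - |x.2| ^ (p / (p - 1))) :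
    (∀ x : ℝ × ℝ,
      DifferentiableAt ℝ u x ∧
      fderiv ℝ u x (1, 0) = p / (p - 1) * |x.1| ^ ((2 - p) / (p - 1)) * x.1 ∧
      fderiv ℝ u x (0, 1) = -(p / (p - 1) * |x.2| ^ ((2 - p) / (p - 1)) * x.2)) ∧
    (∀ φ : ℝ × ℝ → ℝ, ContDiff ℝ (⊤ : ℕ∞) φ → HasCompactSupport φ →
      ∫ x : ℝ × ℝ,
        (|fderiv ℝ u x (1, 0)| ^ (p - 2) * fderiv ℝ u x (1, 0) * fderiv ℝ φ x (1, 0)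
          + |fderiv ℝ u x (0, 1)| ^ (p - 2) * fderiv ℝ u x (0, 1) * fderiv ℝ φ x (0, 1)) = 0) := by
  have hp1 : (0:ℝ) < p - 1 := by linarith
  have ha : 1 < p / (p - 1) := by
    rw [lt_div_iff₀ hp1]; linarith
  have hae : p / (p - 1) - 2 = (2 - p) / (p - 1) := by field_simp; ring
  have key : ∀ x : ℝ × ℝ, HasFDerivAt u
      (((ContinuousLinearMap.smulRight (1 : ℝ →L[ℝ] ℝ)
          (p / (p - 1) * |x.1| ^ (p / (p - 1) - 2) * x.1)).comp
            (ContinuousLinearMap.fst ℝ ℝ ℝ)) -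
       ((ContinuousLinearMap.smulRight (1 : ℝ →L[ℝ] ℝ)
          (p / (p - 1) * |x.2| ^ (p / (p - 1) - 2) * x.2)).comp
            (ContinuousLinearMap.snd ℝ ℝ ℝ))) x := by
    intro x
    have h1 := ((absrpow_hasDerivAt ha x.1).hasFDerivAt).comp x hasFDerivAt_fst
    have h2 := ((absrpow_hasDerivAt ha x.2).hasFDerivAt).comp x hasFDerivAt_snd
    apply (h1.sub h2).congr_of_eventuallyEq
    filter_upwards with y
    rw [hu y]; rfl
  have hd1 : ∀ x : ℝ × ℝ, fderiv ℝ u x (1, 0)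
      = p / (p - 1) * |x.1| ^ (p / (p - 1) - 2) * x.1 := by
    intro x
    rw [(key x).fderiv]
    simp
  have hd2 : ∀ x : ℝ × ℝ, fderiv ℝ u x (0, 1)
      = -(p / (p - 1) * |x.2| ^ (p / (p - 1) - 2) * x.2) := by
    intro x
    rw [(key x).fderiv]
    simp
  constructor
  · intro x
    exact ⟨(key x).differentiableAt, by rw [hd1 x, hae], by rw [hd2 x, hae]⟩
  · intro φ hφ hφc
    have hcd : ContDiff ℝ 1 φ := hφ.of_le (by simp)
    have hφdiff : Differentiable ℝ φ := hcd.differentiable one_ne_zero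
    have hφcont : Continuous φ := hφdiff.continuous
    have hφint : Integrable φ := hφcont.integrable_of_hasCompactSupport hφc
    have hcont1 : Continuous (fun x : ℝ × ℝ => fderiv ℝ φ x (1, 0)) :=
      (hcd.continuous_fderiv one_ne_zero).clm_apply continuous_const
    have hcont2 : Continuous (fun x : ℝ × ℝ => fderiv ℝ φ x (0, 1)) :=
      (hcd.continuous_fderiv one_ne_zero).clm_apply continuous_const
    have hint1 : Integrable (fun x : ℝ × ℝ => x.1 * fderiv ℝ φ x (1, 0)) :=
      (continuous_fst.mul hcont1).integrable_of_hasCompactSupport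
        ((hφc.fderiv_apply ℝ (1, 0)).mul_left)
    have hint2 : Integrable (fun x : ℝ × ℝ => x.2 * fderiv ℝ φ x (0, 1)) :=
      (continuous_snd.mul hcont2).integrable_of_hasCompactSupport
        ((hφc.fderiv_apply ℝ (0, 1)).mul_left)
    have hfst : ∀ x : ℝ × ℝ, fderiv ℝ (fun y : ℝ × ℝ => y.1) x ((1:ℝ), (0:ℝ)) * φ x = φ x := by
      intro x
      rw [(hasFDerivAt_fst (𝕜 := ℝ) (p := x)).fderiv]
      simp
    have hsnd : ∀ x : ℝ × ℝ, fderiv ℝ (fun y : ℝ × ℝ => y.2) x ((0:ℝ), (1:ℝ)) * φ x = φ x := by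
      intro x
      rw [(hasFDerivAt_snd (𝕜 := ℝ) (p := x)).fderiv]
      simp
    have hF : ∫ x : ℝ × ℝ, x.1 * fderiv ℝ φ x (1, 0) = - ∫ x : ℝ × ℝ, φ x := by
      rw [integral_mul_fderiv_eq_neg_fderiv_mul_of_integrable
        (hφint.congr (Eventually.of_forall fun x => (hfst x).symm)) hint1
        ((continuous_fst.mul hφcont).integrable_of_hasCompactSupport hφc.mul_left)
        (fun x _ => differentiable_fst x) (fun x _ => hφdiff x)]
      congr 1
      exact integral_congr_ae (Eventually.of_forall hfst)
    have hG : ∫ x : ℝ × ℝ, x.2 * fderiv ℝ φ x (0, 1) = - ∫ x : ℝ × ℝ, φ x := by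
      rw [integral_mul_fderiv_eq_neg_fderiv_mul_of_integrable
        (hφint.congr (Eventually.of_forall fun x => (hsnd x).symm)) hint2
        ((continuous_snd.mul hφcont).integrable_of_hasCompactSupport hφc.mul_left)
        (fun x _ => differentiable_snd x) (fun x _ => hφdiff x)]
      congr 1
      exact integral_congr_ae (Eventually.of_forall hsnd)
    have hEq : ∀ x : ℝ × ℝ,
        |fderiv ℝ u x (1, 0)| ^ (p - 2) * fderiv ℝ u x (1, 0) * fderiv ℝ φ x (1, 0)
          + |fderiv ℝ u x (0, 1)| ^ (p - 2) * fderiv ℝ u x (0, 1) * fderiv ℝ φ x (0, 1)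
        = (p / (p - 1)) ^ (p - 1) * (x.1 * fderiv ℝ φ x (1, 0))
          - (p / (p - 1)) ^ (p - 1) * (x.2 * fderiv ℝ φ x (0, 1)) := by
      intro x
      rw [hd1 x, hd2 x, abs_neg]
      have f1 := flux_eq hp x.1
      have f2 := flux_eq hp x.2
      linear_combination fderiv ℝ φ x (1, 0) * f1 - fderiv ℝ φ x (0, 1) * f2
    calc ∫ x : ℝ × ℝ,
        (|fderiv ℝ u x (1, 0)| ^ (p - 2) * fderiv ℝ u x (1, 0) * fderiv ℝ φ x (1, 0)
          + |fderiv ℝ u x (0, 1)| ^ (p - 2) * fderiv ℝ u x (0, 1) * fderiv ℝ φ x (0, 1))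
        = ∫ x : ℝ × ℝ, ((p / (p - 1)) ^ (p - 1) * (x.1 * fderiv ℝ φ x (1, 0))
            - (p / (p - 1)) ^ (p - 1) * (x.2 * fderiv ℝ φ x (0, 1))) := by
          exact integral_congr_ae (Eventually.of_forall hEq)
      _ = 0 := by
          rw [integral_sub (hint1.const_mul _) (hint2.const_mul _),
            integral_const_mul, integral_const_mul, hF, hG]
          ring
end

section
/- Let p > 2 and β ∈ ℝ, and define F : ℝ → ℝ by F(t) = (p/2)·∫_β^t |s|^{(p-2)/2}·(s − β)₊ ds, where (a)₊ = max{a, 0}. Then there exists a constant C = C(p) > 1 such that for every t ∈ ℝ: (1/C)·(t − β)₊^{(p+2)/2} ≤ F(t) ≤ C·( |t|^{(p-2)/2} + (max{0, −β})^{(p-2)/2} )·(t − β)₊². -/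
/-!
Write `α = (p - 2)/2` and `L = (t - β)₊`. For the upper bound, `|s| ≤ max(|t|, β₋)` on
`[β, t]`, so the integrand is at most `(|t|^α + β₋^α)(s - β)`, which integrates to the
quadratic bound. For the lower bound, one of `t` and `-β` is at least `L/2`, so `[β, t]`
contains a window of length `L/8` (next to `t` or next to `β`) on which both `|s|` and `s - β`
are at least `L/8`; this window alone contributes `(L/8)^(α+2) = (L/8)^((p+2)/2)`.
-/

open MeasureTheory intervalIntegral Set

section

variable {α β : ℝ}

lemma continuous_abs_rpow_mul_max (hα : 0 ≤ α) (β : ℝ) :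
    Continuous fun s : ℝ => |s| ^ α * max (s - β) 0 :=
  (continuous_abs.rpow_const fun _ => Or.inr hα).mul
    ((continuous_id.sub continuous_const).max continuous_const)

lemma integral_abs_rpow_mul_max_of_le {t : ℝ} (α : ℝ) (ht : t ≤ β) :
    ∫ s in β..t, |s| ^ α * max (s - β) 0 = 0 := by
  rw [integral_symm, neg_eq_zero]
  refine (integral_congr fun s hs => ?_).trans integral_zero
  have hsβ : s ≤ β := by rw [uIcc_of_le ht] at hs; exact hs.2
  simp [max_eq_right (sub_nonpos.mpr hsβ)]

lemma rpow_add_two_le_integral_abs_rpow_mul_max (hα : 0 ≤ α) {t a c : ℝ}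
    (hβa : β ≤ a) (hat : a + c ≤ t) (hc : 0 ≤ c)
    (hwindow : ∀ s ∈ Icc a (a + c), c ≤ |s| ∧ c ≤ s - β) :
    c ^ (α + 2) ≤ ∫ s in β..t, |s| ^ α * max (s - β) 0 := by
  have hint : ∀ u v, IntervalIntegrable (fun s => |s| ^ α * max (s - β) 0) volume u v :=
    (continuous_abs_rpow_mul_max hα β).intervalIntegrable
  have hwin : ∫ _ in a..a + c, c ^ (α + 1) ≤ ∫ s in a..a + c, |s| ^ α * max (s - β) 0 := by
    refine integral_mono_on (by linarith) intervalIntegrable_const (hint _ _) fun s hs => ?_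
    obtain ⟨habs, hsβ⟩ := hwindow s hs
    rw [max_eq_left (hc.trans hsβ), Real.rpow_add_one' hc (by positivity)]
    exact mul_le_mul (Real.rpow_le_rpow hc habs hα) hsβ hc (by positivity)
  calc c ^ (α + 2) = (a + c - a) * c ^ (α + 1) := by
        rw [show α + 2 = α + 1 + 1 by ring, Real.rpow_add_one' hc (by positivity)]; ring
    _ = ∫ _ in a..a + c, c ^ (α + 1) := by rw [intervalIntegral.integral_const, smul_eq_mul]
    _ ≤ ∫ s in a..a + c, |s| ^ α * max (s - β) 0 := hwin
    _ ≤ ∫ s in β..t, |s| ^ α * max (s - β) 0 :=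
        integral_mono_interval hβa (by linarith) hat
          (Filter.Eventually.of_forall fun s => by positivity) (hint β t)

lemma exists_window_of_lt {t : ℝ} (ht : β < t) :
    ∃ a, β ≤ a ∧ a + (t - β) / 8 ≤ t ∧
      ∀ s ∈ Icc a (a + (t - β) / 8), (t - β) / 8 ≤ |s| ∧ (t - β) / 8 ≤ s - β := by
  by_cases htL : (t - β) / 2 ≤ t
  · refine ⟨t - (t - β) / 8, by linarith, by linarith, fun s ⟨hs₁, _⟩ => ⟨?_, by linarith⟩⟩
    exact (by linarith : (t - β) / 8 ≤ s).trans (le_abs_self s)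
  · refine ⟨β + (t - β) / 8, by linarith, by linarith, fun s ⟨hs₁, hs₂⟩ => ⟨?_, by linarith⟩⟩
    exact (by linarith : (t - β) / 8 ≤ -s).trans (neg_le_abs s)

lemma div_eight_rpow_le_integral_abs_rpow_mul_max (hα : 0 ≤ α) (t : ℝ) :
    (max (t - β) 0 / 8) ^ (α + 2) ≤ ∫ s in β..t, |s| ^ α * max (s - β) 0 := by
  rcases le_or_gt t β with ht | ht
  · rw [max_eq_right (sub_nonpos.mpr ht), integral_abs_rpow_mul_max_of_le α ht, zero_div,
      Real.zero_rpow (by linarith)]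
  · obtain ⟨a, hβa, hat, hwindow⟩ := exists_window_of_lt ht
    rw [max_eq_left (sub_pos.mpr ht).le]
    exact rpow_add_two_le_integral_abs_rpow_mul_max hα hβa hat (by linarith) hwindow

lemma abs_rpow_le_of_mem_Icc (hα : 0 ≤ α) {s t : ℝ} (hs : s ∈ Icc β t) :
    |s| ^ α ≤ |t| ^ α + max 0 (-β) ^ α := by
  have hβ : 0 ≤ max 0 (-β) := le_max_left _ _
  rcases le_total 0 s with hs₀ | hs₀
  · have habs : |s| ≤ |t| := by rw [abs_of_nonneg hs₀]; exact hs.2.trans (le_abs_self t)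
    linarith [Real.rpow_le_rpow (abs_nonneg s) habs hα, Real.rpow_nonneg hβ α]
  · have habs : |s| ≤ max 0 (-β) := by
      rw [abs_of_nonpos hs₀]; exact (neg_le_neg hs.1).trans (le_max_right _ _)
    linarith [Real.rpow_le_rpow (abs_nonneg s) habs hα, Real.rpow_nonneg (abs_nonneg t) α]

lemma integral_abs_rpow_mul_max_le (hα : 0 ≤ α) (t : ℝ) :
    ∫ s in β..t, |s| ^ α * max (s - β) 0 ≤
      (|t| ^ α + max 0 (-β) ^ α) * max (t - β) 0 ^ 2 / 2 := by
  rcases le_or_gt t β with ht | ht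
  · rw [integral_abs_rpow_mul_max_of_le α ht, max_eq_right (sub_nonpos.mpr ht)]
    simp
  set K := |t| ^ α + max 0 (-β) ^ α
  have hbound : ∀ s ∈ Icc β t, |s| ^ α * max (s - β) 0 ≤ K * (s - β) := fun s hs => by
    rw [max_eq_left (sub_nonneg.mpr hs.1)]
    exact mul_le_mul_of_nonneg_right (abs_rpow_le_of_mem_Icc hα hs) (sub_nonneg.mpr hs.1)
  calc ∫ s in β..t, |s| ^ α * max (s - β) 0 ≤ ∫ s in β..t, K * (s - β) :=
        integral_mono_on ht.le ((continuous_abs_rpow_mul_max hα β).intervalIntegrable _ _)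
          ((by fun_prop : Continuous fun s => K * (s - β)).intervalIntegrable _ _) hbound
    _ = K * max (t - β) 0 ^ 2 / 2 := by
        rw [intervalIntegral.integral_const_mul, integral_comp_sub_right (fun x => x), integral_id,
          max_eq_left (sub_pos.mpr ht).le]
        ring

end

/-- two-sided bounds for `F(t) = (p/2)∫_β^t |s|^{(p-2)/2}(s−β)₊ ds`, `p > 2`. -/
theorem stmt_2 (p : ℝ) (hp : 2 < p) (β : ℝ)
    (F : ℝ → ℝ)
    (hF : ∀ t, F t = p / 2 * ∫ s in β..t, |s| ^ ((p - 2) / 2) * max (s - β) 0) :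
    ∃ C > (1 : ℝ), ∀ t : ℝ,
      (1 / C) * (max (t - β) 0) ^ ((p + 2) / 2) ≤ F t ∧
      F t ≤ C * (|t| ^ ((p - 2) / 2) + (max 0 (-β)) ^ ((p - 2) / 2)) * (max (t - β) 0) ^ 2 := by
  have hα : 0 ≤ (p - 2) / 2 := by linarith
  set E : ℝ := 8 ^ ((p + 2) / 2)
  have hE : 1 ≤ E := Real.one_le_rpow (by norm_num) (by linarith)
  refine ⟨p * E, by nlinarith, fun t => ⟨?_, ?_⟩⟩
  · have hlow := div_eight_rpow_le_integral_abs_rpow_mul_max (β := β) hα t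
    rw [show (p - 2) / 2 + 2 = (p + 2) / 2 by ring,
      Real.div_rpow (le_max_right _ _) (by norm_num)] at hlow
    change _ / E ≤ _ at hlow
    set m := max (t - β) 0 ^ ((p + 2) / 2)
    have hm : 0 ≤ m := by positivity
    rw [hF]
    calc 1 / (p * E) * m ≤ p / 2 * (m / E) := by
          rw [div_mul_eq_mul_div, one_mul, mul_div_assoc', div_le_div_iff₀ (by positivity)
            (by positivity)]
          nlinarith [mul_nonneg (mul_nonneg hm (zero_le_one.trans hE))
            (by nlinarith : 0 ≤ p ^ 2 - 2)]
      _ ≤ _ := mul_le_mul_of_nonneg_left hlow (by linarith)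
  · have hup := integral_abs_rpow_mul_max_le (β := β) hα t
    set K := (|t| ^ ((p - 2) / 2) + max 0 (-β) ^ ((p - 2) / 2)) * max (t - β) 0 ^ 2
    have hK : 0 ≤ K := by positivity
    rw [hF, mul_assoc]
    calc p / 2 * ∫ s in β..t, |s| ^ ((p - 2) / 2) * max (s - β) 0 ≤ p / 2 * (K / 2) :=
          mul_le_mul_of_nonneg_left hup (by linarith)
      _ ≤ p * E * K := by
          nlinarith [mul_nonneg (mul_nonneg hK (by linarith : 0 ≤ p)) (by linarith : 0 ≤ E - 1 / 4)]
end

section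
/- Let p > 2 and define F₋(X) = (p/(p+2))·(|X|^{(p+2)/2} − 1) + (|X|^{(p-2)/2}·X + 1) for X > −1. Then there exists a constant C = C(p) > 1 such that for every X > −1: (1/C)·(X + 1)^{(p+2)/2} ≤ F₋(X) ≤ C·( |X|^{(p-2)/2} + 1 )·(X + 1)². -/
/-!
Write `u = p / 2`. For `X ≥ 0`, `(u + 1) F₋(X) = u X^{u+1} + (u + 1) X^u + 1`, and both bounds are
elementary there (the lower one is the convexity bound `(X + 1)^{u+1} ≤ 2^u (X^{u+1} + 1)`).
For `X = -t ≤ 0`, `(u + 1) F₋(X) = h(t) = u t^{u+1} - (u + 1) t^u + 1` with `h(1) = 0` and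
`h'(t) = -u(u+1) t^{u-1} (1 - t)`. Comparing derivatives from `t = 1` with multiples of `(1 - t)^2`
gives `h(t) ≍ (1 - t)^2` on `[1/2, 1]`, and since `h` decreases on `[0, 1]` the lower bound extends
to all of `[0, 1]` with a worse constant; finally `(X + 1)^{u+1} ≤ (X + 1)^2` when `X ≤ 0`.
-/

open Real Set

theorem le_of_hasDerivAt_le_of_right_le {f g f' g' : ℝ → ℝ} {a b x : ℝ}
    (hf : ContinuousOn f (Icc a b)) (hg : ContinuousOn g (Icc a b))
    (hf' : ∀ y ∈ Ioo a b, HasDerivAt f (f' y) y) (hg' : ∀ y ∈ Ioo a b, HasDerivAt g (g' y) y)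
    (hderiv : ∀ y ∈ Ioo a b, g' y ≤ f' y) (hb : f b ≤ g b) (hx : x ∈ Icc a b) :
    f x ≤ g x := by
  have hmono : MonotoneOn (f - g) (Icc a b) := by
    refine monotoneOn_of_hasDerivWithinAt_nonneg (f' := f' - g') (convex_Icc a b) (hf.sub hg)
      ?_ ?_ <;> rw [interior_Icc] <;> intro y hy
    · exact ((hf' y hy).sub (hg' y hy)).hasDerivWithinAt
    · exact sub_nonneg.mpr (hderiv y hy)
  have := hmono hx ⟨hx.1.trans hx.2, le_rfl⟩ hx.2
  simp only [Pi.sub_apply] at this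
  linarith

lemma hasDerivAt_const_mul_one_sub_sq (c x : ℝ) :
    HasDerivAt (fun y => c * (1 - y) ^ 2) (-(2 * c * (1 - x))) x := by
  refine ((((hasDerivAt_id x).const_sub 1).pow 2).const_mul c).congr_deriv ?_
  simp only [id, Nat.cast_ofNat]
  ring

/-- The paper's `F₋`, written in terms of `u = p / 2`. -/
noncomputable def Fminus (u X : ℝ) : ℝ :=
  u / (u + 1) * (|X| ^ (u + 1) - 1) + (|X| ^ (u - 1) * X + 1)

noncomputable def negBranch (u t : ℝ) : ℝ := u * t ^ (u + 1) - (u + 1) * t ^ u + 1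

lemma add_one_mul_Fminus_neg {u t : ℝ} (hu : 0 < u) (ht : 0 ≤ t) :
    (u + 1) * Fminus u (-t) = negBranch u t := by
  have htu : t ^ (u - 1) * t = t ^ u := by
    rw [← rpow_add_one' ht (by linarith), sub_add_cancel]
  rw [Fminus, negBranch, abs_neg, abs_of_nonneg ht, mul_neg, htu]
  field_simp
  ring

lemma add_one_mul_Fminus_of_nonneg {u X : ℝ} (hu : 0 < u) (hX : 0 ≤ X) :
    (u + 1) * Fminus u X = u * X ^ (u + 1) + (u + 1) * X ^ u + 1 := by
  have hXu : X ^ (u - 1) * X = X ^ u := by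
    rw [← rpow_add_one' hX (by linarith), sub_add_cancel]
  rw [Fminus, abs_of_nonneg hX, hXu]
  field_simp
  ring

lemma continuous_negBranch {u : ℝ} (hu : 0 ≤ u) : Continuous (negBranch u) := by
  have h1 := continuous_rpow_const (q := u + 1) (by linarith)
  have h2 := continuous_rpow_const hu
  unfold negBranch
  fun_prop

lemma hasDerivAt_negBranch (u : ℝ) {t : ℝ} (ht : 0 < t) :
    HasDerivAt (negBranch u) (-(u * (u + 1) * t ^ (u - 1) * (1 - t))) t := by
  have h1 : HasDerivAt (fun s : ℝ => s ^ (u + 1)) ((u + 1) * t ^ u) t := by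
    simpa using hasDerivAt_rpow_const (x := t) (p := u + 1) (Or.inl ht.ne')
  have h2 : HasDerivAt (fun s : ℝ => s ^ u) (u * t ^ (u - 1)) t :=
    hasDerivAt_rpow_const (Or.inl ht.ne')
  have htu : t ^ u = t ^ (u - 1) * t := by rw [← rpow_add_one ht.ne', sub_add_cancel]
  refine (((h1.const_mul u).sub (h2.const_mul (u + 1))).add_const 1).congr_deriv ?_
  rw [htu]
  ring

lemma antitoneOn_negBranch {u : ℝ} (hu : 0 ≤ u) : AntitoneOn (negBranch u) (Icc 0 1) := by
  refine antitoneOn_of_hasDerivWithinAt_nonpos (f' := fun t => -(u * (u + 1) * t ^ (u - 1) * (1 - t)))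
    (convex_Icc 0 1)
    (continuous_negBranch hu).continuousOn ?_ ?_ <;> rw [interior_Icc] <;> intro t ht
  · exact (hasDerivAt_negBranch u ht.1).hasDerivWithinAt
  · have : 0 ≤ u * (u + 1) * t ^ (u - 1) * (1 - t) := by
      have := ht.2.le
      have := rpow_nonneg ht.1.le (u - 1)
      have : 0 ≤ u * (u + 1) := by nlinarith
      positivity
    linarith

lemma negBranch_le {u t : ℝ} (hu : 1 ≤ u) (ht : t ∈ Icc (0 : ℝ) 1) :
    negBranch u t ≤ u * (u + 1) / 2 * (1 - t) ^ 2 := by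
  refine le_of_hasDerivAt_le_of_right_le (continuous_negBranch (by linarith)).continuousOn
    (by fun_prop) (fun s hs => hasDerivAt_negBranch u hs.1)
    (fun s _ => hasDerivAt_const_mul_one_sub_sq _ s) ?_ (by simp [negBranch]) ht
  intro s hs
  have h1 : s ^ (u - 1) ≤ 1 := rpow_le_one hs.1.le hs.2.le (by linarith)
  have h2 : 0 ≤ u * (u + 1) * (1 - s) := mul_nonneg (by nlinarith) (by linarith [hs.2])
  nlinarith

lemma mul_sq_le_negBranch_of_half_le {u t : ℝ} (hu : 1 ≤ u) (ht : t ∈ Icc (1 / 2 : ℝ) 1) :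
    u * (u + 1) / 2 ^ u * (1 - t) ^ 2 ≤ negBranch u t := by
  refine le_of_hasDerivAt_le_of_right_le (by fun_prop)
    (continuous_negBranch (by linarith)).continuousOn
    (fun s _ => hasDerivAt_const_mul_one_sub_sq _ s)
    (fun s hs => hasDerivAt_negBranch u (by linarith [hs.1])) ?_ (by simp [negBranch]) ht
  intro s hs
  have h2u : 2 / 2 ^ u = (1 / 2 : ℝ) ^ (u - 1) := by
    rw [one_div, inv_rpow (by norm_num), rpow_sub two_pos, rpow_one]
    field_simp
  have h1 : 2 / 2 ^ u ≤ s ^ (u - 1) := by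
    rw [h2u]
    exact rpow_le_rpow (by norm_num) hs.1.le (by linarith)
  have h2 : 0 ≤ u * (u + 1) * (1 - s) := mul_nonneg (by nlinarith) (by linarith [hs.2])
  have h3 : 2 * (u * (u + 1) / 2 ^ u) * (1 - s) = u * (u + 1) * (1 - s) * (2 / 2 ^ u) := by ring
  rw [h3]
  nlinarith

lemma mul_sq_le_negBranch {u t : ℝ} (hu : 1 ≤ u) (ht : t ∈ Icc (0 : ℝ) 1) :
    u * (u + 1) / 2 ^ (u + 2) * (1 - t) ^ 2 ≤ negBranch u t := by
  have h4 : (2 : ℝ) ^ (u + 2) = 2 ^ u * 4 := by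
    rw [rpow_add two_pos]
    norm_num
  have hc : 0 ≤ u * (u + 1) / 2 ^ u := by
    have : 0 < u + 1 := by linarith
    positivity
  rw [h4, ← div_div]
  rcases le_total (1 / 2 : ℝ) t with h | h
  · have := mul_sq_le_negBranch_of_half_le hu ⟨h, ht.2⟩
    nlinarith [sq_nonneg (1 - t)]
  · have hmono := antitoneOn_negBranch (by linarith : (0 : ℝ) ≤ u) ⟨ht.1, h.trans (by norm_num)⟩
      ⟨by norm_num, by norm_num⟩ h
    have hhalf := mul_sq_le_negBranch_of_half_le hu (t := 1 / 2) ⟨le_rfl, by norm_num⟩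
    have : (1 - t) ^ 2 ≤ 1 := by nlinarith [ht.1]
    nlinarith

lemma rpow_le_mul_Fminus_of_nonpos {u X : ℝ} (hu : 1 ≤ u) (hX : X ∈ Ioc (-1) 0) :
    (X + 1) ^ (u + 1) ≤ 2 ^ (u + 2) / u * Fminus u X := by
  have hXt : X + 1 = 1 - -X := by ring
  have hpos : 0 < X + 1 := by linarith [hX.1]
  have hrpow : (X + 1) ^ (u + 1) ≤ (X + 1) ^ 2 := by
    rw [← rpow_natCast]
    exact rpow_le_rpow_of_exponent_ge hpos (by linarith [hX.2]) (by push_cast; linarith)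
  have hlow := mul_sq_le_negBranch hu ⟨neg_nonneg.mpr hX.2, by linarith [hX.1]⟩
  rw [← add_one_mul_Fminus_neg (by linarith) (neg_nonneg.mpr hX.2), neg_neg, ← hXt] at hlow
  have h2 : (0 : ℝ) < 2 ^ (u + 2) := by positivity
  have hu0 : 0 < u := by linarith
  calc (X + 1) ^ (u + 1) ≤ (X + 1) ^ 2 := hrpow
    _ = 2 ^ (u + 2) / (u * (u + 1)) * (u * (u + 1) / 2 ^ (u + 2) * (X + 1) ^ 2) := by
        field_simp
    _ ≤ 2 ^ (u + 2) / (u * (u + 1)) * ((u + 1) * Fminus u X) := by gcongr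
    _ = 2 ^ (u + 2) / u * Fminus u X := by field_simp

lemma Fminus_le_of_nonpos {u X : ℝ} (hu : 1 ≤ u) (hX : X ∈ Ioc (-1) 0) :
    Fminus u X ≤ u / 2 * (X + 1) ^ 2 := by
  have hup := negBranch_le hu ⟨neg_nonneg.mpr hX.2, by linarith [hX.1]⟩
  rw [← add_one_mul_Fminus_neg (by linarith) (neg_nonneg.mpr hX.2), neg_neg,
    show 1 - -X = X + 1 by ring] at hup
  have : 0 < u + 1 := by linarith
  nlinarith

lemma rpow_le_mul_Fminus_of_nonneg {u X : ℝ} (hu : 1 ≤ u) (hX : 0 ≤ X) :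
    (X + 1) ^ (u + 1) ≤ 2 ^ u * (u + 1) * Fminus u X := by
  have hconvex : (X + 1) ^ (u + 1) ≤ 2 ^ u * (X ^ (u + 1) + 1) := by
    lift X to NNReal using hX
    have := NNReal.rpow_add_le_mul_rpow_add_rpow X 1 (p := u + 1) (by linarith)
    rw [add_sub_cancel_right, NNReal.one_rpow] at this
    exact_mod_cast this
  have hF := add_one_mul_Fminus_of_nonneg (by linarith : 0 < u) hX
  have h1 : 0 ≤ X ^ (u + 1) := rpow_nonneg hX _
  have h2 : 0 ≤ X ^ u := rpow_nonneg hX _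
  have : (0 : ℝ) < 2 ^ u := by positivity
  calc (X + 1) ^ (u + 1) ≤ 2 ^ u * (X ^ (u + 1) + 1) := hconvex
    _ ≤ 2 ^ u * ((u + 1) * Fminus u X) := by
        gcongr
        nlinarith [mul_nonneg (sub_nonneg.2 hu) h1]
    _ = 2 ^ u * (u + 1) * Fminus u X := by ring

lemma Fminus_le_of_nonneg {u X : ℝ} (hu : 0 < u) (hX : 0 ≤ X) :
    Fminus u X ≤ (|X| ^ (u - 1) + 1) * (X + 1) ^ 2 := by
  have hXu : X ^ u = X ^ (u - 1) * X := by rw [← rpow_add_one' hX (by linarith), sub_add_cancel]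
  have hXu1 : X ^ (u + 1) = X ^ (u - 1) * X * X := by
    rw [← hXu, ← rpow_add_one' hX (by linarith)]
  have hF := add_one_mul_Fminus_of_nonneg hu hX
  rw [hXu1, hXu] at hF
  rw [abs_of_nonneg hX]
  have ha : 0 ≤ X ^ (u - 1) := rpow_nonneg hX _
  have hu1 : 0 < u + 1 := by linarith
  refine le_of_mul_le_mul_left ?_ hu1
  rw [hF]
  nlinarith [mul_nonneg ha hX, mul_nonneg (mul_nonneg ha hX) hX, mul_nonneg hu1.le (mul_nonneg ha hX)]

lemma rpow_le_mul_Fminus {u X : ℝ} (hu : 1 ≤ u) (hX : -1 < X) :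
    (X + 1) ^ (u + 1) ≤ 2 ^ (u + 2) * (u + 1) * Fminus u X := by
  have h2u : (2 : ℝ) ^ (u + 2) = 2 ^ u * 4 := by
    rw [rpow_add two_pos]
    norm_num
  have h2u_pos : (0 : ℝ) < 2 ^ u := by positivity
  obtain ⟨K, hK, hKC, hlow⟩ : ∃ K : ℝ, 0 < K ∧ K ≤ 2 ^ (u + 2) * (u + 1) ∧
      (X + 1) ^ (u + 1) ≤ K * Fminus u X := by
    rcases le_total X 0 with hX0 | hX0
    · refine ⟨2 ^ (u + 2) / u, by positivity, ?_, rpow_le_mul_Fminus_of_nonpos hu ⟨hX, hX0⟩⟩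
      rw [div_le_iff₀ (by linarith), h2u]
      nlinarith [mul_pos h2u_pos (show 0 < (u + 1) * u - 1 by nlinarith)]
    · refine ⟨2 ^ u * (u + 1), by positivity, ?_, rpow_le_mul_Fminus_of_nonneg hu hX0⟩
      rw [h2u]
      nlinarith
  have hF : 0 ≤ Fminus u X :=
    nonneg_of_mul_nonneg_right ((rpow_nonneg (by linarith) _).trans hlow) hK
  exact hlow.trans (by gcongr)

lemma Fminus_le {u X : ℝ} (hu : 1 ≤ u) (hX : -1 < X) :
    Fminus u X ≤ (u + 1) * (|X| ^ (u - 1) + 1) * (X + 1) ^ 2 := by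
  have hw : 0 ≤ |X| ^ (u - 1) := rpow_nonneg (abs_nonneg X) _
  have hsq : 0 ≤ (X + 1) ^ 2 := sq_nonneg _
  rcases le_total X 0 with hX0 | hX0
  · have := Fminus_le_of_nonpos hu ⟨hX, hX0⟩
    nlinarith [mul_nonneg (mul_nonneg (show (0 : ℝ) ≤ u + 1 by linarith) hw) hsq]
  · have := Fminus_le_of_nonneg (by linarith : 0 < u) hX0
    nlinarith [mul_nonneg (show (0 : ℝ) ≤ |X| ^ (u - 1) + 1 by linarith) hsq]

/-- for `p > 2` there is `C = C(p) > 1` such that for all `X > −1`,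
`(1/C)(X+1)^{(p+2)/2} ≤ F₋(X) ≤ C(|X|^{(p-2)/2} + 1)(X+1)²`, where
`F₋(X) = (p/(p+2))(|X|^{(p+2)/2} − 1) + (|X|^{(p-2)/2}X + 1)`. -/
theorem stmt_4 (p : ℝ) (hp : 2 < p) :
    ∃ C > (1 : ℝ), ∀ X : ℝ, -1 < X →
      (1 / C) * (X + 1) ^ ((p + 2) / 2) ≤
        p / (p + 2) * (|X| ^ ((p + 2) / 2) - 1) + (|X| ^ ((p - 2) / 2) * X + 1) ∧
      p / (p + 2) * (|X| ^ ((p + 2) / 2) - 1) + (|X| ^ ((p - 2) / 2) * X + 1) ≤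
        C * (|X| ^ ((p - 2) / 2) + 1) * (X + 1) ^ 2 := by
  obtain ⟨u, rfl⟩ : ∃ u, p = 2 * u := ⟨p / 2, by ring⟩
  have hu : 1 < u := by linarith
  rw [show (2 * u + 2) / 2 = u + 1 by ring, show (2 * u - 2) / 2 = u - 1 by ring,
    show 2 * u / (2 * u + 2) = u / (u + 1) by field_simp]
  have h4 : (4 : ℝ) ≤ 2 ^ (u + 2) := by
    calc (4 : ℝ) = 2 ^ (2 : ℝ) := by norm_num
      _ ≤ 2 ^ (u + 2) := rpow_le_rpow_of_exponent_le (by norm_num) (by linarith)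
  refine ⟨2 ^ (u + 2) * (u + 1), by nlinarith, fun X hX => ⟨?_, ?_⟩⟩
  · rw [one_div_mul_eq_div, div_le_iff₀ (by positivity), mul_comm]
    exact rpow_le_mul_Fminus hu.le hX
  · refine (Fminus_le hu.le hX).trans ?_
    gcongr
    nlinarith
end

section
/- Let 1 < q ≤ 2 and N ≥ 1. Then for every z₀, z₁ ∈ ℝ^N one has ‖ ‖z₀‖^{q-2}·z₀ − ‖z₁‖^{q-2}·z₁ ‖ ≤ 2^{2-q}·‖z₀ − z₁‖^{q-1}, where ‖z‖^{q-2}·z is interpreted as the zero vector when z = 0. -/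
/-!
Put `φ(z) = ‖z‖^(α-1) • z` with `α = q - 1 ∈ (0, 1]`, `r = ‖a‖`, `s = ‖b‖` and `c = 2μ - 1` the cosine
of the angle between `a` and `b`. By the law of cosines
`‖φ a - φ b‖² = μ (r^α - s^α)² + (1 - μ) (r^α + s^α)²` and `‖a - b‖² = μ (r - s)² + (1 - μ) (r + s)²`.
The endpoint terms satisfy `|r^α - s^α| ≤ |r - s|^α` and `r^α + s^α ≤ 2^(1-α) (r + s)^α`, and concavity
of `t ↦ t^α` moves the convex combination inside the power.
-/

open Real InnerProductGeometry

namespace Real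

theorem abs_rpow_sub_rpow_le {α r s : ℝ} (hα0 : 0 ≤ α) (hα1 : α ≤ 1) (hr : 0 ≤ r) (hs : 0 ≤ s) :
    |r ^ α - s ^ α| ≤ |r - s| ^ α := by
  wlog hsr : s ≤ r generalizing r s
  · rw [abs_sub_comm, abs_sub_comm r]
    exact this hs hr (le_of_not_ge hsr)
  have hsub : r ^ α ≤ (r - s) ^ α + s ^ α := by
    simpa using rpow_add_le_add_rpow (sub_nonneg.2 hsr) hs hα0 hα1
  rw [abs_of_nonneg (sub_nonneg.2 (rpow_le_rpow hs hsr hα0)), abs_of_nonneg (sub_nonneg.2 hsr)]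
  linarith

theorem rpow_add_rpow_le_two_rpow_mul_rpow_add {α r s : ℝ} (hα0 : 0 ≤ α) (hα1 : α ≤ 1)
    (hr : 0 ≤ r) (hs : 0 ≤ s) : r ^ α + s ^ α ≤ 2 ^ (1 - α) * (r + s) ^ α := by
  have hmid := (concaveOn_rpow hα0 hα1).2 hr hs (by norm_num : (0 : ℝ) ≤ 1 / 2)
    (by norm_num : (0 : ℝ) ≤ 1 / 2) (by norm_num)
  have hhalf : (1 / 2 : ℝ) • r + (1 / 2 : ℝ) • s = (r + s) / 2 := by
    simp only [smul_eq_mul]; ring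
  have htwo : (2 : ℝ) ^ (1 - α) * (r + s) ^ α = 2 * ((r + s) / 2) ^ α := by
    rw [div_rpow (by linarith) zero_le_two, rpow_sub zero_lt_two, rpow_one]
    field_simp
  rw [hhalf, smul_eq_mul, smul_eq_mul] at hmid
  linarith

theorem sq_rpow_sub_two_mul_add_sq_rpow_le {α c r s : ℝ} (hα0 : 0 ≤ α) (hα1 : α ≤ 1)
    (hc : |c| ≤ 1) (hr : 0 ≤ r) (hs : 0 ≤ s) :
    (r ^ α) ^ 2 - 2 * c * (r ^ α * s ^ α) + (s ^ α) ^ 2 ≤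
      4 ^ (1 - α) * (r ^ 2 - 2 * c * (r * s) + s ^ 2) ^ α := by
  obtain ⟨μ, rfl⟩ : ∃ μ, c = 2 * μ - 1 := ⟨(1 + c) / 2, by ring⟩
  obtain ⟨hc0, hc1⟩ := abs_le.1 hc
  have hμ0 : 0 ≤ μ := by linarith
  have hμ1 : 0 ≤ 1 - μ := by linarith
  have hsub : (r ^ α - s ^ α) ^ 2 ≤ 4 ^ (1 - α) * ((r - s) ^ 2) ^ α := by
    have h4 : (1 : ℝ) ≤ 4 ^ (1 - α) := one_le_rpow (by norm_num) (by linarith)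
    calc (r ^ α - s ^ α) ^ 2 = |r ^ α - s ^ α| ^ 2 := (sq_abs _).symm
      _ ≤ (|r - s| ^ α) ^ 2 := by gcongr; exact abs_rpow_sub_rpow_le hα0 hα1 hr hs
      _ = ((r - s) ^ 2) ^ α := by rw [rpow_pow_comm (abs_nonneg _), sq_abs]
      _ ≤ 4 ^ (1 - α) * ((r - s) ^ 2) ^ α := le_mul_of_one_le_left (by positivity) h4
  have hadd : (r ^ α + s ^ α) ^ 2 ≤ 4 ^ (1 - α) * ((r + s) ^ 2) ^ α := by
    calc (r ^ α + s ^ α) ^ 2 ≤ (2 ^ (1 - α) * (r + s) ^ α) ^ 2 := by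
          gcongr; exact rpow_add_rpow_le_two_rpow_mul_rpow_add hα0 hα1 hr hs
      _ = 4 ^ (1 - α) * ((r + s) ^ 2) ^ α := by
          rw [mul_pow, rpow_pow_comm zero_le_two, rpow_pow_comm (by positivity)]
          norm_num
  have hconc := (concaveOn_rpow hα0 hα1).2 (sq_nonneg (r - s)) (sq_nonneg (r + s)) hμ0 hμ1
    (add_sub_cancel μ 1)
  simp only [smul_eq_mul] at hconc
  calc _ = μ * (r ^ α - s ^ α) ^ 2 + (1 - μ) * (r ^ α + s ^ α) ^ 2 := by ring
    _ ≤ 4 ^ (1 - α) * (μ * ((r - s) ^ 2) ^ α + (1 - μ) * ((r + s) ^ 2) ^ α) := by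
        linarith [mul_le_mul_of_nonneg_left hsub hμ0, mul_le_mul_of_nonneg_left hadd hμ1]
    _ ≤ 4 ^ (1 - α) * (μ * (r - s) ^ 2 + (1 - μ) * (r + s) ^ 2) ^ α := by gcongr
    _ = 4 ^ (1 - α) * (r ^ 2 - 2 * (2 * μ - 1) * (r * s) + s ^ 2) ^ α := by congr 2; ring

end Real

section InnerProductSpace

variable {E : Type*} [NormedAddCommGroup E] [InnerProductSpace ℝ E]

theorem norm_rpow_sub_one_smul_self {α : ℝ} (hα : α ≠ 0) (a : E) :
    ‖‖a‖ ^ (α - 1) • a‖ = ‖a‖ ^ α := by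
  rw [norm_smul, norm_of_nonneg (rpow_nonneg (norm_nonneg a) _),
    ← rpow_add_one' (norm_nonneg a) (by simpa using hα), sub_add_cancel]

theorem inner_rpow_sub_one_smul_self {α : ℝ} (hα : α ≠ 0) (a b : E) :
    inner ℝ (‖a‖ ^ (α - 1) • a) (‖b‖ ^ (α - 1) • b) = cos (angle a b) * (‖a‖ ^ α * ‖b‖ ^ α) := by
  have hpow (x : E) : ‖x‖ ^ α = ‖x‖ ^ (α - 1) * ‖x‖ := by
    rw [← rpow_add_one' (norm_nonneg x) (by simpa using hα), sub_add_cancel]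
  rw [real_inner_smul_left, real_inner_smul_right, ← cos_angle_mul_norm_mul_norm, hpow a, hpow b]
  ring

theorem norm_rpow_sub_one_smul_sub_le {α : ℝ} (hα0 : 0 < α) (hα1 : α ≤ 1) (a b : E) :
    ‖‖a‖ ^ (α - 1) • a - ‖b‖ ^ (α - 1) • b‖ ≤ 2 ^ (1 - α) * ‖a - b‖ ^ α := by
  have hlhs : ‖‖a‖ ^ (α - 1) • a - ‖b‖ ^ (α - 1) • b‖ ^ 2 =
      (‖a‖ ^ α) ^ 2 - 2 * cos (angle a b) * (‖a‖ ^ α * ‖b‖ ^ α) + (‖b‖ ^ α) ^ 2 := by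
    rw [norm_sub_sq_real, norm_rpow_sub_one_smul_self hα0.ne', norm_rpow_sub_one_smul_self hα0.ne',
      inner_rpow_sub_one_smul_self hα0.ne', mul_assoc]
  have hrhs : (2 ^ (1 - α) * ‖a - b‖ ^ α) ^ 2 =
      4 ^ (1 - α) * (‖a‖ ^ 2 - 2 * cos (angle a b) * (‖a‖ * ‖b‖) + ‖b‖ ^ 2) ^ α := by
    rw [mul_pow, rpow_pow_comm zero_le_two, rpow_pow_comm (norm_nonneg _),
      norm_sub_sq_real, ← cos_angle_mul_norm_mul_norm, mul_assoc]
    norm_num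
  have hsq : ‖‖a‖ ^ (α - 1) • a - ‖b‖ ^ (α - 1) • b‖ ^ 2 ≤ (2 ^ (1 - α) * ‖a - b‖ ^ α) ^ 2 := by
    rw [hlhs, hrhs]
    exact sq_rpow_sub_two_mul_add_sq_rpow_le hα0.le hα1 (abs_cos_le_one _) (norm_nonneg a)
      (norm_nonneg b)
  exact (pow_le_pow_iff_left₀ (norm_nonneg _) (by positivity) two_ne_zero).1 hsq

end InnerProductSpace

theorem stmt_5_general (q : ℝ) (hq1 : 1 < q) (hq2 : q ≤ 2) (N : ℕ) :
    ∀ z₀ z₁ : EuclideanSpace ℝ (Fin N),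
      ‖‖z₀‖ ^ (q - 2) • z₀ - ‖z₁‖ ^ (q - 2) • z₁‖ ≤
        2 ^ (2 - q) * ‖z₀ - z₁‖ ^ (q - 1) := by
  intro z₀ z₁
  have h := norm_rpow_sub_one_smul_sub_le (α := q - 1) (by linarith) (by linarith) z₀ z₁
  rwa [show q - 1 - 1 = q - 2 by ring, show 1 - (q - 1) = 2 - q by ring] at h

/-- for `1 < q ≤ 2` and `z₀, z₁ ∈ ℝ^N`,
`‖ ‖z₀‖^{q-2}z₀ − ‖z₁‖^{q-2}z₁ ‖ ≤ 2^{2-q} ‖z₀ − z₁‖^{q-1}`. -/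
theorem stmt_5 (q : ℝ) (hq1 : 1 < q) (hq2 : q ≤ 2) (N : ℕ) (hN : 1 ≤ N) :
    ∀ z₀ z₁ : EuclideanSpace ℝ (Fin N),
      ‖‖z₀‖ ^ (q - 2) • z₀ - ‖z₁‖ ^ (q - 2) • z₁‖ ≤
        2 ^ (2 - q) * ‖z₀ - z₁‖ ^ (q - 1) :=
  stmt_5_general q hq1 hq2 N
end

section
/- Let 1 < p ≤ 2. Then for every ε ≥ 0 and every t, s ∈ ℝ one has |(ε + t²)^{(p-2)/4}·t − (ε + s²)^{(p-2)/4}·s| ≤ 2^{(2-p)/2}·|t − s|^{p/2}, where when ε = 0 the expression (t²)^{(p-2)/4}·t is interpreted as 0 at t = 0. -/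
/-!
Write `ψ(u) = (ε + u²)^((p-2)/4) u`. For `ε > 0` this is odd and smooth, with
`ψ'(u) = (ε + u²)^((p-2)/4) (ε + (p/2) u²) / (ε + u²) ≥ 0`, and `ψ'` decreases in `|u|` because
`p ≤ 2`. Writing `t = m + h`, `s = m - h` with `h ≥ 0`, the map `m ↦ ψ(m + h) - ψ(m - h)` is even
and decreasing on `[0, ∞)`, so `|ψ t - ψ s| ≤ 2 ψ(h) ≤ 2 h^(p/2) = 2^((2-p)/2) |t - s|^(p/2)`.
The case `ε = 0`, where `ψ` is not differentiable at `0`, follows by letting `ε → 0⁺`.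
-/

open Real Set Filter Topology

namespace Function.Odd

variable {f f' : ℝ → ℝ}

theorem sub_le_two_mul_half_of_hasDerivAt (hodd : f.Odd) (hf : ∀ x, HasDerivAt f (f' x) x)
    (hf' : ∀ x y, |x| ≤ |y| → f' y ≤ f' x) {s t : ℝ} (hst : s ≤ t) :
    f t - f s ≤ 2 * f ((t - s) / 2) := by
  set h := (t - s) / 2
  set m := (t + s) / 2
  have hh : 0 ≤ h := div_nonneg (sub_nonneg.2 hst) zero_le_two
  let F x := f (x + h) - f (x - h)
  have hF_deriv (x : ℝ) : HasDerivAt F (f' (x + h) - f' (x - h)) x :=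
    ((hf _).comp_add_const x h).sub ((hf _).comp_sub_const x h)
  have hF_anti : AntitoneOn F (Ici 0) := by
    refine antitoneOn_of_hasDerivWithinAt_nonpos (convex_Ici 0)
      (fun x _ ↦ (hF_deriv x).continuousAt.continuousWithinAt)
      (fun x _ ↦ (hF_deriv x).hasDerivWithinAt) fun x hx ↦ ?_
    rw [interior_Ici, mem_Ioi] at hx
    exact sub_nonpos.2 (hf' _ _ (abs_le_abs (by linarith) (by linarith)))
  have hF_even (x : ℝ) : F (-x) = F x := by
    simp only [F, show -x + h = -(x - h) by ring, show -x - h = -(x + h) by ring, hodd.eq]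
    ring
  have hF_zero : F 0 = 2 * f h := by
    simp only [F, zero_add, zero_sub, hodd.eq]
    ring
  have hF_abs : F m = F |m| := by
    rcases abs_choice m with hm | hm <;> rw [hm]
    exact (hF_even m).symm
  calc f t - f s = F m := by simp only [F, m, h]; ring_nf
    _ = F |m| := hF_abs
    _ ≤ F 0 := hF_anti self_mem_Ici (abs_nonneg m) (abs_nonneg m)
    _ = 2 * f h := hF_zero

theorem abs_sub_le_two_mul_half_of_hasDerivAt (hodd : f.Odd) (hf : ∀ x, HasDerivAt f (f' x) x)
    (hf'_nonneg : ∀ x, 0 ≤ f' x) (hf' : ∀ x y, |x| ≤ |y| → f' y ≤ f' x) (s t : ℝ) :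
    |f t - f s| ≤ 2 * f (|t - s| / 2) := by
  have hmono : Monotone f := monotone_of_hasDerivAt_nonneg hf hf'_nonneg
  rcases le_total s t with hst | hts
  · rw [abs_of_nonneg (sub_nonneg.2 (hmono hst)), abs_of_nonneg (sub_nonneg.2 hst)]
    exact sub_le_two_mul_half_of_hasDerivAt hodd hf hf' hst
  · rw [abs_sub_comm, abs_of_nonneg (sub_nonneg.2 (hmono hts)), abs_sub_comm,
      abs_of_nonneg (sub_nonneg.2 hts)]
    exact sub_le_two_mul_half_of_hasDerivAt hodd hf hf' hts

end Function.Odd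

noncomputable def regPow (ε p u : ℝ) : ℝ := (ε + u ^ 2) ^ ((p - 2) / 4) * u

noncomputable def regPowDeriv (ε p u : ℝ) : ℝ :=
  (ε + u ^ 2) ^ ((p - 2) / 4) * ((ε + p / 2 * u ^ 2) / (ε + u ^ 2))

section

variable {ε p : ℝ}

theorem regPow_odd : (regPow ε p).Odd := fun u ↦ by
  simp only [regPow, neg_sq, mul_neg]

theorem hasDerivAt_regPow (hε : 0 < ε) (u : ℝ) :
    HasDerivAt (regPow ε p) (regPowDeriv ε p u) u := by
  have hpos : 0 < ε + u ^ 2 := by positivity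
  have hbase : HasDerivAt (fun u : ℝ ↦ ε + u ^ 2) (2 * u) u := by
    simpa using (hasDerivAt_pow 2 u).const_add ε
  have H : HasDerivAt (fun u ↦ (ε + u ^ 2) ^ ((p - 2) / 4) * u)
      (2 * u * ((p - 2) / 4) * (ε + u ^ 2) ^ ((p - 2) / 4 - 1) * u +
        (ε + u ^ 2) ^ ((p - 2) / 4) * 1) u :=
    (hbase.rpow_const (Or.inl hpos.ne')).mul (hasDerivAt_id' u)
  refine H.congr_deriv ?_
  rw [regPowDeriv, rpow_sub_one hpos.ne']
  field_simp
  ring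

theorem regPowDeriv_nonneg (hε : 0 ≤ ε) (hp : 0 ≤ p) (u : ℝ) : 0 ≤ regPowDeriv ε p u := by
  unfold regPowDeriv
  have : 0 ≤ p / 2 * u ^ 2 := by positivity
  positivity

theorem regPowDeriv_le_of_abs_le (hε : 0 < ε) (hp0 : 0 ≤ p) (hp2 : p ≤ 2) {u v : ℝ}
    (huv : |u| ≤ |v|) : regPowDeriv ε p v ≤ regPowDeriv ε p u := by
  have hsq : u ^ 2 ≤ v ^ 2 := sq_le_sq.2 huv
  have hu : 0 < ε + u ^ 2 := by positivity
  have hv : 0 < ε + v ^ 2 := by positivity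
  have hpow : (ε + v ^ 2) ^ ((p - 2) / 4) ≤ (ε + u ^ 2) ^ ((p - 2) / 4) :=
    rpow_le_rpow_of_nonpos hu (by linarith) (by linarith)
  -- `(ε + q x) / (ε + x) = q + (1 - q) ε / (ε + x)` decreases in `x` when `q = p / 2 ≤ 1`
  have hratio : (ε + p / 2 * v ^ 2) / (ε + v ^ 2) ≤ (ε + p / 2 * u ^ 2) / (ε + u ^ 2) := by
    rw [div_le_div_iff₀ hv hu]
    nlinarith [mul_nonneg (mul_nonneg hε.le (by linarith : (0 : ℝ) ≤ 1 - p / 2))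
      (sub_nonneg.2 hsq)]
  have : 0 ≤ p / 2 * v ^ 2 := by positivity
  exact mul_le_mul hpow hratio (by positivity) (by positivity)

theorem regPow_le_rpow (hε : 0 ≤ ε) (hp2 : p ≤ 2) {h : ℝ} (hh : 0 ≤ h) :
    regPow ε p h ≤ h ^ (p / 2) := by
  rcases hh.eq_or_lt with rfl | hh
  · simp [regPow, rpow_nonneg]
  calc regPow ε p h ≤ (h ^ 2) ^ ((p - 2) / 4) * h :=
        mul_le_mul_of_nonneg_right
          (rpow_le_rpow_of_nonpos (by positivity) (by linarith) (by linarith)) hh.le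
    _ = h ^ (p / 2) := by
        rw [← rpow_natCast h 2, ← rpow_mul hh.le, ← rpow_add_one hh.ne']
        congr 1
        ring

theorem abs_regPow_sub_le_of_pos (hε : 0 < ε) (hp0 : 0 ≤ p) (hp2 : p ≤ 2) (t s : ℝ) :
    |regPow ε p t - regPow ε p s| ≤ 2 ^ ((2 - p) / 2) * |t - s| ^ (p / 2) :=
  calc |regPow ε p t - regPow ε p s| ≤ 2 * regPow ε p (|t - s| / 2) :=
        regPow_odd.abs_sub_le_two_mul_half_of_hasDerivAt (hasDerivAt_regPow hε)
          (regPowDeriv_nonneg hε.le hp0) (fun _ _ ↦ regPowDeriv_le_of_abs_le hε hp0 hp2) s t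
    _ ≤ 2 * (|t - s| / 2) ^ (p / 2) := by
        gcongr
        exact regPow_le_rpow hε.le hp2 (by positivity)
    _ = 2 ^ ((2 - p) / 2) * |t - s| ^ (p / 2) := by
        rw [div_rpow (abs_nonneg _) zero_le_two, show (2 - p) / 2 = 1 - p / 2 by ring,
          rpow_sub two_pos, rpow_one]
        ring

theorem continuousAt_regPow_zero (p u : ℝ) : ContinuousAt (fun ε ↦ regPow ε p u) 0 := by
  rcases eq_or_ne u 0 with rfl | hu
  · simpa [regPow] using continuousAt_const
  · exact ((continuousAt_id.add continuousAt_const).rpow_const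
      (Or.inl (by simpa using hu))).mul continuousAt_const

theorem abs_regPow_sub_le (hε : 0 ≤ ε) (hp0 : 0 ≤ p) (hp2 : p ≤ 2) (t s : ℝ) :
    |regPow ε p t - regPow ε p s| ≤ 2 ^ ((2 - p) / 2) * |t - s| ^ (p / 2) := by
  rcases hε.lt_or_eq with hε | rfl
  · exact abs_regPow_sub_le_of_pos hε hp0 hp2 t s
  have hlim := (((continuousAt_regPow_zero p t).sub (continuousAt_regPow_zero p s)).abs).tendsto
  refine le_of_tendsto (hlim.mono_left (nhdsWithin_le_nhds (s := Ioi 0))) ?_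
  filter_upwards [self_mem_nhdsWithin] with ε (hε : 0 < ε)
  exact abs_regPow_sub_le_of_pos hε hp0 hp2 t s

end

/-- for `1 < p ≤ 2`, `ε ≥ 0` and `t, s ∈ ℝ`,
`|(ε+t²)^{(p-2)/4} t − (ε+s²)^{(p-2)/4} s| ≤ 2^{(2-p)/2} |t−s|^{p/2}`. -/
theorem stmt_6 (p : ℝ) (hp1 : 1 < p) (hp2 : p ≤ 2) :
    ∀ ε : ℝ, 0 ≤ ε → ∀ t s : ℝ,
      |(ε + t ^ 2) ^ ((p - 2) / 4) * t - (ε + s ^ 2) ^ ((p - 2) / 4) * s| ≤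
        2 ^ ((2 - p) / 2) * |t - s| ^ (p / 2) :=
  fun _ hε t s ↦ abs_regPow_sub_le hε (by linarith) hp2 t s
end

section
/- Let {Yₙ}_{n≥1} be a sequence of nonnegative real numbers and let c > 0, b > 1, β > 0 be such that Y_{n+1} ≤ c·bⁿ·Yₙ^{1+β} for every n ≥ 1, and Y₁ ≤ c^{-1/β}·b^{-(β+1)/β²}. Then Yₙ → 0 as n → ∞. -/
/-!
With `q = b^(-1/β)` and `K = c^(-1/β) b^(-1/β²)` one has `c K^β = q` and `b q^β = 1`, and these
two identities are exactly what makes the bound `Yₙ ≤ K qⁿ` propagate through the recursion: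
`c bⁿ (K qⁿ)^(1+β) = K qⁿ (c K^β) (b q^β)ⁿ = K qⁿ⁺¹`. The hypothesis on `Y₁` is the case
`n = 1`, and `q < 1` since `b > 1`.
-/

open Filter Topology

theorem le_mul_pow_of_le_mul_pow_mul_rpow {Y : ℕ → ℝ} {c b β K q : ℝ}
    (hc : 0 ≤ c) (hb : 0 ≤ b) (hβ : 0 ≤ β) (hK : 0 ≤ K) (hq : 0 ≤ q)
    (hY : ∀ n, 1 ≤ n → 0 ≤ Y n)
    (hrec : ∀ n, 1 ≤ n → Y (n + 1) ≤ c * b ^ n * Y n ^ (1 + β))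
    (hcK : c * K ^ β = q) (hbq : b * q ^ β = 1) (hY1 : Y 1 ≤ K * q) :
    ∀ n, 1 ≤ n → Y n ≤ K * q ^ n := by
  refine Nat.le_induction (by simpa using hY1) fun n hn ih => ?_
  have hβ' : 1 + β ≠ 0 := by linarith
  calc Y (n + 1) ≤ c * b ^ n * Y n ^ (1 + β) := hrec n hn
    _ ≤ c * b ^ n * (K * q ^ n) ^ (1 + β) := by gcongr; exact hY n hn
    _ = K * q ^ n * (c * K ^ β) * (b * q ^ β) ^ n := by
      rw [Real.rpow_one_add' (by positivity) hβ', Real.mul_rpow hK (by positivity),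
        ← Real.rpow_pow_comm hq, mul_pow]
      ring
    _ = K * q ^ (n + 1) := by rw [hcK, hbq, one_pow]; ring

theorem tendsto_zero_of_le_mul_pow {Y : ℕ → ℝ} {K q : ℝ} (hq : 0 ≤ q) (hq1 : q < 1)
    (hY : ∀ n, 1 ≤ n → 0 ≤ Y n) (hYle : ∀ n, 1 ≤ n → Y n ≤ K * q ^ n) :
    Tendsto Y atTop (𝓝 0) := by
  have hgeom := (tendsto_pow_atTop_nhds_zero_of_lt_one hq hq1).const_mul K
  rw [mul_zero] at hgeom
  refine squeeze_zero' ?_ ?_ hgeom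
  · filter_upwards [eventually_ge_atTop 1] with n hn using hY n hn
  · filter_upwards [eventually_ge_atTop 1] with n hn using hYle n hn

/-- fast geometric convergence lemma: if `Y_{n+1} ≤ c bⁿ Yₙ^{1+β}` for `n ≥ 1`
and `Y₁ ≤ c^{-1/β} b^{-(β+1)/β²}`, then `Yₙ → 0`. -/
theorem stmt_7 (Y : ℕ → ℝ) (c b β : ℝ) (hc : 0 < c) (hb : 1 < b) (hβ : 0 < β)
    (hY : ∀ n : ℕ, 1 ≤ n → 0 ≤ Y n)
    (hrec : ∀ n : ℕ, 1 ≤ n → Y (n + 1) ≤ c * b ^ n * Y n ^ (1 + β))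
    (hY1 : Y 1 ≤ c ^ (-1 / β) * b ^ (-(β + 1) / β ^ 2)) :
    Filter.Tendsto Y Filter.atTop (nhds 0) := by
  have hb0 : 0 < b := one_pos.trans hb
  set q := b ^ (-1 / β)
  set K := c ^ (-1 / β) * b ^ (-1 / β ^ 2)
  have hq1 : q < 1 := Real.rpow_lt_one_of_one_lt_of_neg hb (div_neg_of_neg_of_pos (by norm_num) hβ)
  have hcK : c * K ^ β = q := by
    rw [Real.mul_rpow (by positivity) (by positivity), ← Real.rpow_mul hc.le,
      ← Real.rpow_mul hb0.le, div_mul_cancel₀ _ hβ.ne', Real.rpow_neg_one, ← mul_assoc,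
      mul_inv_cancel₀ hc.ne', one_mul]
    congr 1
    field_simp
  have hbq : b * q ^ β = 1 := by
    rw [← Real.rpow_mul hb0.le, div_mul_cancel₀ _ hβ.ne', Real.rpow_neg_one,
      mul_inv_cancel₀ hb0.ne']
  have hKq : K * q = c ^ (-1 / β) * b ^ (-(β + 1) / β ^ 2) := by
    rw [mul_assoc, ← Real.rpow_add hb0]
    congr 2
    field_simp
    ring
  exact tendsto_zero_of_le_mul_pow (by positivity) hq1 hY
    (le_mul_pow_of_le_mul_pow_mul_rpow hc.le hb0.le hβ.le (by positivity) (by positivity) hY hrec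
      hcK hbq (hKq ▸ hY1))
end

section
/- There exists a universal constant C > 0 such that for every continuously differentiable function f : ℝ² → ℝ with compact support, ∫_{ℝ²} |f|² dx ≤ C·|{x ∈ ℝ² : f(x) ≠ 0}|·∫_{ℝ²} ‖∇f‖² dx, where |·| denotes the two-dimensional Lebesgue measure of the set. -/
/-!
Write `A = {f ≠ 0}`. Cauchy–Schwarz against the indicator of `A` gives `‖f‖₂⁴ ≤ |A| ‖f²‖₂²`.
In the plane the Gagliardo–Nirenberg–Sobolev exponent `n / (n - 1)` equals `2`, so `‖f²‖₂ ≲ ‖∇(f²)‖₁ ≤ 2 ‖f ∇f‖₁ ≤ 2 ‖f‖₂ ‖∇f‖₂`. Combining, `‖f‖₂⁴ ≲ |A| ‖f‖₂² ‖∇f‖₂²`,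
and dividing by `‖f‖₂²` gives the inequality.
-/

open MeasureTheory Module Function
open scoped ENNReal

section Lebesgue

variable {α : Type*} [MeasurableSpace α] {μ : Measure α}

theorem ENNReal.sq_lintegral_mul_le {f g : α → ℝ≥0∞} (hf : AEMeasurable f μ)
    (hg : AEMeasurable g μ) :
    (∫⁻ x, f x * g x ∂μ) ^ 2 ≤ (∫⁻ x, f x ^ 2 ∂μ) * ∫⁻ x, g x ^ 2 ∂μ := by
  have H := ENNReal.lintegral_mul_le_Lp_mul_Lq μ .two_two hf hg
  simp only [Pi.mul_apply, ENNReal.rpow_two] at H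
  have hsq (a : ℝ≥0∞) : (a ^ (1 / 2 : ℝ)) ^ 2 = a := by
    rw [← ENNReal.rpow_natCast, ← ENNReal.rpow_mul]; norm_num
  calc (∫⁻ x, f x * g x ∂μ) ^ 2
      ≤ ((∫⁻ x, f x ^ 2 ∂μ) ^ (1 / 2 : ℝ) * (∫⁻ x, g x ^ 2 ∂μ) ^ (1 / 2 : ℝ)) ^ 2 := by gcongr
    _ = (∫⁻ x, f x ^ 2 ∂μ) * ∫⁻ x, g x ^ 2 ∂μ := by rw [mul_pow, hsq, hsq]

theorem sq_lintegral_enorm_sq_le_measure_support_mul {f : α → ℝ} (hf : Measurable f) :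
    (∫⁻ x, ‖f x‖ₑ ^ 2 ∂μ) ^ 2 ≤ μ (support f) * ∫⁻ x, ‖f x‖ₑ ^ 4 ∂μ := by
  have hA : MeasurableSet (support f) := measurableSet_support hf
  have H := ENNReal.sq_lintegral_mul_le (μ := μ) (f := (support f).indicator 1)
    (g := fun x ↦ ‖f x‖ₑ ^ 2) (measurable_one.indicator hA).aemeasurable
    (hf.enorm.pow_const 2).aemeasurable
  have h_mul (x : α) : (support f).indicator 1 x * ‖f x‖ₑ ^ 2 = ‖f x‖ₑ ^ 2 := by
    by_cases hx : f x = 0 <;> simp [hx]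
  have h_ind (x : α) : (support f).indicator (1 : α → ℝ≥0∞) x ^ 2 = (support f).indicator 1 x := by
    by_cases hx : x ∈ support f <;> simp [hx]
  simpa only [h_mul, h_ind, lintegral_indicator_one hA, ← pow_mul] using H

theorem MeasureTheory.MemLp.lintegral_enorm_sq_ne_top {F : Type*} [NormedAddCommGroup F] {g : α → F}
    (hg : MemLp g 2 μ) : ∫⁻ x, ‖g x‖ₑ ^ 2 ∂μ ≠ ∞ := by
  have h := eLpNorm_nnreal_pow_eq_lintegral (f := g) (μ := μ) (p := 2) two_ne_zero
  simp only [NNReal.coe_ofNat, ENNReal.rpow_two, ENNReal.coe_ofNat] at h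
  exact h ▸ ENNReal.pow_ne_top hg.eLpNorm_ne_top

theorem integral_norm_sq_eq_toReal_lintegral {F : Type*} [NormedAddCommGroup F] {g : α → F}
    (hg : AEStronglyMeasurable g μ) :
    ∫ x, ‖g x‖ ^ 2 ∂μ = (∫⁻ x, ‖g x‖ₑ ^ 2 ∂μ).toReal := by
  rw [← integral_toReal (hg.enorm.pow_const 2) (ae_of_all _ fun x ↦ by finiteness)]
  simp only [ENNReal.toReal_pow, toReal_enorm]

end Lebesgue

theorem norm_gradient {F : Type*} [NormedAddCommGroup F] [InnerProductSpace ℝ F] [CompleteSpace F]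
    (f : F → ℝ) (x : F) : ‖gradient f x‖ = ‖fderiv ℝ f x‖ :=
  (InnerProductSpace.toDual ℝ F).symm.norm_map _

section Sobolev

variable {E : Type*} [NormedAddCommGroup E] [NormedSpace ℝ E]

theorem enorm_fderiv_mul_self_le {f : E → ℝ} {x : E} (hf : DifferentiableAt ℝ f x) :
    ‖fderiv ℝ (fun y ↦ f y * f y) x‖ₑ ≤ 2 * (‖f x‖ₑ * ‖fderiv ℝ f x‖ₑ) := by
  rw [fderiv_fun_mul hf hf, ← two_smul ℝ, enorm_smul, enorm_smul,
    Real.enorm_eq_ofReal zero_le_two, ENNReal.ofReal_ofNat]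

variable [MeasurableSpace E] [BorelSpace E] [FiniteDimensional ℝ E] (μ : Measure E)
  [μ.IsAddHaarMeasure]

theorem lintegral_enorm_pow_four_le (hE : finrank ℝ E = 2) {f : E → ℝ} (hf : ContDiff ℝ 1 f)
    (h2f : HasCompactSupport f) :
    ∫⁻ x, ‖f x‖ₑ ^ 4 ∂μ ≤ 4 * lintegralPowLePowLIntegralFDerivConst μ 2 *
      (∫⁻ x, ‖f x‖ₑ ^ 2 ∂μ) * ∫⁻ x, ‖fderiv ℝ f x‖ₑ ^ 2 ∂μ := by
  set K := lintegralPowLePowLIntegralFDerivConst μ 2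
  have hp : Real.HolderConjugate (finrank ℝ E) 2 := by rw [hE]; exact mod_cast .two_two
  have gns := lintegral_pow_le_pow_lintegral_fderiv μ (hf.mul hf) h2f.mul_right hp
  have h_deriv : ∫⁻ x, ‖fderiv ℝ (fun y ↦ f y * f y) x‖ₑ ∂μ ≤
      2 * ∫⁻ x, ‖f x‖ₑ * ‖fderiv ℝ f x‖ₑ ∂μ := by
    rw [← lintegral_const_mul' _ _ (by norm_num)]
    exact lintegral_mono fun x ↦ enorm_fderiv_mul_self_le (hf.differentiable one_ne_zero x)
  calc ∫⁻ x, ‖f x‖ₑ ^ 4 ∂μ = ∫⁻ x, ‖f x * f x‖ₑ ^ (2 : ℝ) ∂μ := by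
        refine lintegral_congr fun x ↦ ?_
        rw [ENNReal.rpow_two, enorm_mul]; ring
    _ ≤ K * (∫⁻ x, ‖fderiv ℝ (fun y ↦ f y * f y) x‖ₑ ∂μ) ^ (2 : ℝ) := gns
    _ ≤ K * (2 * ∫⁻ x, ‖f x‖ₑ * ‖fderiv ℝ f x‖ₑ ∂μ) ^ 2 := by
        rw [ENNReal.rpow_two]; gcongr
    _ = 4 * K * (∫⁻ x, ‖f x‖ₑ * ‖fderiv ℝ f x‖ₑ ∂μ) ^ 2 := by ring
    _ ≤ 4 * K * ((∫⁻ x, ‖f x‖ₑ ^ 2 ∂μ) * ∫⁻ x, ‖fderiv ℝ f x‖ₑ ^ 2 ∂μ) := by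
        gcongr
        exact ENNReal.sq_lintegral_mul_le hf.continuous.measurable.enorm.aemeasurable
          (hf.continuous_fderiv one_ne_zero).measurable.enorm.aemeasurable
    _ = 4 * K * (∫⁻ x, ‖f x‖ₑ ^ 2 ∂μ) * ∫⁻ x, ‖fderiv ℝ f x‖ₑ ^ 2 ∂μ := by ring

theorem lintegral_enorm_sq_le (hE : finrank ℝ E = 2) {f : E → ℝ} (hf : ContDiff ℝ 1 f)
    (h2f : HasCompactSupport f) :
    ∫⁻ x, ‖f x‖ₑ ^ 2 ∂μ ≤ 4 * lintegralPowLePowLIntegralFDerivConst μ 2 * μ (support f) *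
      ∫⁻ x, ‖fderiv ℝ f x‖ₑ ^ 2 ∂μ := by
  set I := ∫⁻ x, ‖f x‖ₑ ^ 2 ∂μ
  have hI : I ≠ ∞ := (hf.continuous.memLp_of_hasCompactSupport h2f).lintegral_enorm_sq_ne_top
  rcases eq_or_ne I 0 with h0 | h0
  · simp [h0]
  refine (ENNReal.mul_le_mul_iff_left h0 hI).mp ?_
  calc I * I = I ^ 2 := (sq I).symm
    _ ≤ μ (support f) * ∫⁻ x, ‖f x‖ₑ ^ 4 ∂μ :=
        sq_lintegral_enorm_sq_le_measure_support_mul hf.continuous.measurable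
    _ ≤ μ (support f) * (4 * lintegralPowLePowLIntegralFDerivConst μ 2 * I *
          ∫⁻ x, ‖fderiv ℝ f x‖ₑ ^ 2 ∂μ) := by
        gcongr; exact lintegral_enorm_pow_four_le μ hE hf h2f
    _ = _ := by ring

end Sobolev

/-- a Poincaré-type inequality in the plane: there is a universal `C > 0`
such that for all `C¹` compactly supported `f : ℝ² → ℝ`,
`∫ |f|² ≤ C |{f ≠ 0}| ∫ ‖∇f‖²`. -/
theorem stmt_14 :
    ∃ C > (0 : ℝ), ∀ f : EuclideanSpace ℝ (Fin 2) → ℝ,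
      ContDiff ℝ 1 f → HasCompactSupport f →
      ∫ x, |f x| ^ 2 ≤
        C * (volume {x | f x ≠ 0}).toReal * ∫ x, ‖gradient f x‖ ^ 2 := by
  set K := lintegralPowLePowLIntegralFDerivConst (volume : Measure (EuclideanSpace ℝ (Fin 2))) 2
  refine ⟨4 * K + 1, by positivity, fun f hf h2f ↦ ?_⟩
  have hDf : Continuous (fderiv ℝ f) := hf.continuous_fderiv one_ne_zero
  have hA : volume (support f) ≠ ∞ :=
    ((measure_mono (subset_tsupport f)).trans_lt h2f.isCompact.measure_lt_top).ne
  have hJ : ∫⁻ x, ‖fderiv ℝ f x‖ₑ ^ 2 ≠ ∞ :=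
    (hDf.memLp_of_hasCompactSupport (h2f.fderiv ℝ)).lintegral_enorm_sq_ne_top
  simp only [← Real.norm_eq_abs, norm_gradient]
  rw [integral_norm_sq_eq_toReal_lintegral hf.continuous.aestronglyMeasurable,
    integral_norm_sq_eq_toReal_lintegral hDf.aestronglyMeasurable]
  calc _ ≤ (4 * K * volume (support f) * ∫⁻ x, ‖fderiv ℝ f x‖ₑ ^ 2).toReal :=
        ENNReal.toReal_mono (by finiteness)
          (lintegral_enorm_sq_le volume finrank_euclideanSpace_fin hf h2f)
    _ = 4 * K * (volume (support f)).toReal * (∫⁻ x, ‖fderiv ℝ f x‖ₑ ^ 2).toReal := by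
        simp only [ENNReal.toReal_mul, ENNReal.toReal_ofNat, ENNReal.coe_toReal]
    _ ≤ (4 * K + 1) * (volume (support f)).toReal * (∫⁻ x, ‖fderiv ℝ f x‖ₑ ^ 2).toReal := by
        gcongr; linarith
end
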